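/- For every positive integer k, the thickened 4k-star has edge-crossing width at least k. -/

import Mathlib

/-!
Suppose a tree-cut decomposition has thickness and crossing number at most `m < k`. The bag of
the centre `c` holds at most `m < 4k` of the `u_i`, so some `u_i` lies in a different bag. In the
tree, either these two bags are adjacent, and each of them separates the other from every third
node, or a node strictly between them separates them. Either way there are two nodes `t₁, t₂`
such that every middle vertex `v_{i,j}` outside their bags makes `c v_{i,j}` cross `t₁` or
`u_i v_{i,j}` cross `t₂`. Thus the `4k` common neighbours of `c` and `u_i` are covered by two
bags and two crossing sets, so `4k ≤ 4m`.
-/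

open SimpleGraph

universe u

/-- A tree-cut decomposition of a graph `G`: a finite tree `T` together with
pairwise disjoint (possibly empty) bags covering the vertex set of `G`. -/
structure TreeCutDecomp {V : Type u} (G : SimpleGraph V) where
  β : Type
  fintypeβ : Fintype β
  T : SimpleGraph β
  isTree : T.IsTree
  bag : β → Set V
  disj : Pairwise fun s t => Disjoint (bag s) (bag t)
  covers : ∀ v : V, ∃ t, v ∈ bag t

namespace TreeCutDecomp

variable {V : Type u} {G : SimpleGraph V}

/-- The edge `e` of `G` crosses the bag at node `t`: its endpoints lie in bag-unions of
two distinct components of `T - t`. -/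
def Crosses (D : TreeCutDecomp G) (t : D.β) (e : Sym2 V) : Prop :=
  e ∈ G.edgeSet ∧ ∃ (u v : V) (s₁ s₂ : D.β) (h₁ : s₁ ≠ t) (h₂ : s₂ ≠ t),
    e = s(u, v) ∧ u ∈ D.bag s₁ ∧ v ∈ D.bag s₂ ∧
    ¬ (D.T.induce {x | x ≠ t}).Reachable ⟨s₁, h₁⟩ ⟨s₂, h₂⟩

/-- The number of edges crossing the bag at node `t`. -/
noncomputable def crossNum (D : TreeCutDecomp G) (t : D.β) : ℕ :=
  {e : Sym2 V | D.Crosses t e}.ncard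

/-- The crossing number of the decomposition is at most `k`. -/
def CrossLE (D : TreeCutDecomp G) (k : ℕ) : Prop := ∀ t, D.crossNum t ≤ k

/-- The thickness (maximum bag size) of the decomposition is at most `a`. -/
def ThickLE (D : TreeCutDecomp G) (a : ℕ) : Prop := ∀ t, (D.bag t).ncard ≤ a

end TreeCutDecomp

/-- The `α`-edge-crossing width: minimum crossing number over tree-cut decompositions
of thickness at most `α`. -/
noncomputable def ecrwA {V : Type u} (G : SimpleGraph V) (a : ℕ) : ℕ :=
  sInf {k | ∃ D : TreeCutDecomp G, D.ThickLE a ∧ D.CrossLE k}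

/-- The edge-crossing width: minimum over tree-cut decompositions of the maximum of the
thickness and the crossing number. -/
noncomputable def ecrw {V : Type u} (G : SimpleGraph V) : ℕ :=
  sInf {k | ∃ D : TreeCutDecomp G, D.ThickLE k ∧ D.CrossLE k}

/-- The thickened `n`-star: a star `K_{1,n}` with each edge replaced by `n` internally
vertex-disjoint paths of length two. `Sum.inl ()` is the center `c`, `Sum.inr (Sum.inl i)`
is `u_i`, and `Sum.inr (Sum.inr (i, j))` is the middle vertex `v_{i,j}`. -/
def thickenedStar (n : ℕ) : SimpleGraph (Unit ⊕ (Fin n ⊕ (Fin n × Fin n))) :=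
  SimpleGraph.fromRel fun x y =>
    match x, y with
    | Sum.inl _, Sum.inr (Sum.inr _) => True
    | Sum.inr (Sum.inl i), Sum.inr (Sum.inr (a, _)) => i = a
    | _, _ => False

namespace SimpleGraph

variable {β : Type*} {T : SimpleGraph β}

def Separates (T : SimpleGraph β) (t a b : β) : Prop :=
  a ≠ t ∧ b ≠ t ∧ ∀ p : T.Walk a b, t ∈ p.support

lemma Separates.not_reachable_induce {t a b : β} (h : T.Separates t a b) :
    ¬ (T.induce {x | x ≠ t}).Reachable ⟨a, h.1⟩ ⟨b, h.2.1⟩ := by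
  rintro ⟨p⟩
  have ht := h.2.2 (p.map (Embedding.induce _).toHom)
  erw [Walk.support_map, List.mem_map] at ht
  obtain ⟨x, -, hx⟩ := ht
  exact x.2 hx

lemma Separates.or_of_ne {t a b : β} (h : T.Separates t a b) (s : β) (hs : s ≠ t) :
    T.Separates t a s ∨ T.Separates t b s := by
  by_contra! hn
  obtain ⟨p, hp⟩ : ∃ p : T.Walk a s, t ∉ p.support := by
    simpa [Separates, h.1, hs] using hn.1
  obtain ⟨q, hq⟩ : ∃ q : T.Walk b s, t ∉ q.support := by
    simpa [Separates, h.2.1, hs] using hn.2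
  have ht := h.2.2 (p.append q.reverse)
  simp [Walk.mem_support_append_iff, hp, hq] at ht

lemma IsAcyclic.separates_of_mem_support (hT : T.IsAcyclic) {t a b : β} {p : T.Walk a b}
    (hp : p.IsPath) (ht : t ∈ p.support) (ha : a ≠ t) (hb : b ≠ t) : T.Separates t a b := by
  classical
  refine ⟨ha, hb, fun q => q.support_toPath_subset_support ?_⟩
  rwa [← show (⟨p, hp⟩ : T.Path a b) = q.toPath from (hT.subsingleton_path a b).elim _ _]

lemma IsAcyclic.separates_or_separates_of_adj (hT : T.IsAcyclic) {a b : β} (hab : T.Adj a b)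
    (s : β) (hsa : s ≠ a) (hsb : s ≠ b) : T.Separates b a s ∨ T.Separates a b s := by
  -- otherwise some walk `a → s → b` avoids the bridge `ab`
  by_contra! hn
  obtain ⟨p, hp⟩ : ∃ p : T.Walk a s, b ∉ p.support := by
    simpa [Separates, hab.ne, hsb] using hn.1
  obtain ⟨q, hq⟩ : ∃ q : T.Walk b s, a ∉ q.support := by
    simpa [Separates, hab.ne', hsa] using hn.2
  have hbridge := isBridge_iff_forall_walk_mem_edges.mp
    (isAcyclic_iff_forall_adj_isBridge.mp hT hab) (p.append q.reverse)
  rw [Walk.edges_append, Walk.edges_reverse, List.mem_append, List.mem_reverse] at hbridge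
  rcases hbridge with he | he
  · exact hp (p.snd_mem_support_of_mem_edges he)
  · exact hq (q.fst_mem_support_of_mem_edges he)

lemma IsTree.exists_separates (hT : T.IsTree) {a b : β} (hab : a ≠ b) :
    ∃ t₁ t₂, ∀ s, s ≠ t₁ → s ≠ t₂ → T.Separates t₁ a s ∨ T.Separates t₂ b s := by
  by_cases hadj : T.Adj a b
  · exact ⟨b, a, fun s hsb hsa => hT.isAcyclic.separates_or_separates_of_adj hadj s hsa hsb⟩
  obtain ⟨p, hp⟩ := (hT.connected a b).exists_isPath
  have hsnd : T.Adj a p.snd := p.adj_snd (Walk.not_nil_of_ne hab)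
  have hsep : T.Separates p.snd a b :=
    hT.isAcyclic.separates_of_mem_support hp (p.getVert_mem_support 1) hsnd.ne
      fun h => hadj (h ▸ hsnd)
  exact ⟨p.snd, p.snd, fun s hs _ => hsep.or_of_ne s hs⟩

end SimpleGraph

namespace TreeCutDecomp

variable {V : Type u} {G : SimpleGraph V} (D : TreeCutDecomp G)

noncomputable def node (v : V) : D.β := (D.covers v).choose

lemma mem_bag_node (v : V) : v ∈ D.bag (D.node v) := (D.covers v).choose_spec

lemma node_ne_of_notMem_bag {v : V} {t : D.β} (hv : v ∉ D.bag t) : D.node v ≠ t :=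
  fun h => hv (h ▸ D.mem_bag_node v)

lemma crosses_of_separates {t : D.β} {u v : V} (huv : G.Adj u v)
    (h : D.T.Separates t (D.node u) (D.node v)) : D.Crosses t s(u, v) :=
  ⟨huv, u, v, _, _, h.1, h.2.1, rfl, D.mem_bag_node u, D.mem_bag_node v, h.not_reachable_induce⟩

lemma exists_forall_commonNeighbors {x y : V} (hxy : D.node x ≠ D.node y) :
    ∃ t₁ t₂, ∀ z ∈ G.commonNeighbors x y,
      z ∈ D.bag t₁ ∨ z ∈ D.bag t₂ ∨ D.Crosses t₁ s(x, z) ∨ D.Crosses t₂ s(y, z) := by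
  obtain ⟨t₁, t₂, hsep⟩ := D.isTree.exists_separates hxy
  refine ⟨t₁, t₂, fun z hz => ?_⟩
  by_contra! h
  rcases hsep (D.node z) (D.node_ne_of_notMem_bag h.1) (D.node_ne_of_notMem_bag h.2.1) with hs | hs
  · exact h.2.2.1 (D.crosses_of_separates hz.1 hs)
  · exact h.2.2.2 (D.crosses_of_separates hz.2 hs)

lemma ncard_setOf_crosses_le [Finite V] (t : D.β) (x : V) :
    {z | D.Crosses t s(x, z)}.ncard ≤ D.crossNum t :=
  Set.ncard_le_ncard_of_injOn (fun z => s(x, z)) (fun _ hz => hz)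
    (fun _ _ _ _ h => Sym2.congr_right.mp h)

lemma ncard_commonNeighbors_le [Finite V] {x y : V} (hxy : D.node x ≠ D.node y) {a k : ℕ}
    (ha : D.ThickLE a) (hk : D.CrossLE k) : (G.commonNeighbors x y).ncard ≤ 2 * a + 2 * k := by
  obtain ⟨t₁, t₂, hcover⟩ := D.exists_forall_commonNeighbors hxy
  calc (G.commonNeighbors x y).ncard
      ≤ (D.bag t₁ ∪ D.bag t₂ ∪ {z | D.Crosses t₁ s(x, z)} ∪ {z | D.Crosses t₂ s(y, z)}).ncard :=
        Set.ncard_le_ncard fun z hz => by simpa [or_assoc] using hcover z hz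
    _ ≤ (D.bag t₁).ncard + (D.bag t₂).ncard + {z | D.Crosses t₁ s(x, z)}.ncard
          + {z | D.Crosses t₂ s(y, z)}.ncard := by
        grw [Set.ncard_union_le, Set.ncard_union_le, Set.ncard_union_le]
    _ ≤ a + a + k + k := by
        grw [ha t₁, ha t₂, D.ncard_setOf_crosses_le, D.ncard_setOf_crosses_le, hk t₁, hk t₂]
    _ = 2 * a + 2 * k := by ring

lemma exists_node_ne_of_thickLE [Finite V] {a : ℕ} (ha : D.ThickLE a) {ι : Type*} {f : ι → V}
    (hf : Function.Injective f) (hι : a < Nat.card ι) (t : D.β) : ∃ i, D.node (f i) ≠ t := by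
  by_contra! h
  have hsub : Set.range f ⊆ D.bag t := by
    rintro _ ⟨i, rfl⟩
    exact h i ▸ D.mem_bag_node (f i)
  have := (Set.ncard_le_ncard hsub).trans (ha t)
  rw [Set.ncard_range_of_injective hf] at this
  omega

variable (G) in
def single : TreeCutDecomp G where
  β := Unit
  fintypeβ := inferInstance
  T := ⊥
  isTree := .of_subsingleton
  bag _ := Set.univ
  disj _ _ h := (h (Subsingleton.elim _ _)).elim
  covers _ := ⟨(), Set.mem_univ _⟩

lemma single_thickLE : (single G).ThickLE (Nat.card V) := fun _ => (Set.ncard_univ V).le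

lemma single_crossLE (k : ℕ) : (single G).CrossLE k := by
  intro t
  have : {e | (single G).Crosses t e} = ∅ := Set.eq_empty_of_forall_notMem
    fun _ ⟨_, _, _, s₁, _, h₁, _⟩ => h₁ (Subsingleton.elim (α := Unit) s₁ t)
  simp [crossNum, this]

end TreeCutDecomp

-- `single` makes the set in `ecrw` nonempty, so its `sInf` is not the junk value `0`.
lemma le_ecrw {V : Type u} {G : SimpleGraph V} {k : ℕ}
    (h : ∀ (D : TreeCutDecomp G) (m : ℕ), D.ThickLE m → D.CrossLE m → k ≤ m) : k ≤ ecrw G :=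
  le_csInf ⟨_, _, TreeCutDecomp.single_thickLE, TreeCutDecomp.single_crossLE _⟩
    fun m ⟨D, hthick, hcross⟩ => h D m hthick hcross

lemma le_ncard_commonNeighbors_thickenedStar {n : ℕ} (i : Fin n) :
    n ≤ ((thickenedStar n).commonNeighbors (.inl ()) (.inr (.inl i))).ncard := by
  have hsub : Set.range (Sum.inr ∘ Sum.inr ∘ Prod.mk i) ⊆
      (thickenedStar n).commonNeighbors (.inl ()) (.inr (.inl i)) := by
    rintro _ ⟨j, rfl⟩
    simp [SimpleGraph.mem_commonNeighbors, thickenedStar]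
  have hinj : (Sum.inr ∘ Sum.inr ∘ Prod.mk i :
      Fin n → Unit ⊕ (Fin n ⊕ (Fin n × Fin n))).Injective :=
    Sum.inr_injective.comp (Sum.inr_injective.comp (Prod.mk_right_injective i))
  simpa [Set.ncard_range_of_injective hinj] using Set.ncard_le_ncard hsub

theorem stmt_7_general (k : ℕ) : k ≤ ecrw (thickenedStar (4 * k)) := by
  refine le_ecrw fun D m hthick hcross => ?_
  by_contra! hm
  obtain ⟨i, hi⟩ : ∃ i, D.node (.inr (.inl i)) ≠ D.node (.inl ()) :=
    D.exists_node_ne_of_thickLE hthick (Sum.inr_injective.comp Sum.inl_injective)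
      (by rw [Nat.card_fin]; omega) _
  have hupper := D.ncard_commonNeighbors_le (Ne.symm hi) hthick hcross
  have hlower := le_ncard_commonNeighbors_thickenedStar i
  omega

/-- For every positive integer `k`, the thickened `4k`-star has edge-crossing width
at least `k`. -/
theorem stmt_7 (k : ℕ) (hk : 0 < k) : k ≤ ecrw (thickenedStar (4 * k)) :=
  stmt_7_general k
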